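/- Every smooth lattice polygon with at least 9 vertices has more than 12 lattice points; that is, if P ⊂ ℝ² is a smooth full-dimensional lattice polytope with at least 9 vertices, then |P ∩ ℤ²| ≥ 13. -/

import Mathlib

open Set

/-- Interpret an integer vector as a real vector. -/
def ofInt {d : ℕ} (z : Fin d → ℤ) : Fin d → ℝ := fun i => (z i : ℝ)

/-- A lattice polytope: convex hull of a finite set of integer points. -/
def IsLatticePolytope {d : ℕ} (P : Set (Fin d → ℝ)) : Prop :=
  ∃ V : Finset (Fin d → ℤ), P = convexHull ℝ (ofInt '' (V : Set (Fin d → ℤ)))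

/-- Two vertices are adjacent if the segment between them is an edge
(an extreme subset) of the polytope. -/
def Adjacent {d : ℕ} (P : Set (Fin d → ℝ)) (v w : Fin d → ℝ) : Prop :=
  v ∈ Set.extremePoints ℝ P ∧ w ∈ Set.extremePoints ℝ P ∧ v ≠ w ∧
    IsExtreme ℝ P (segment ℝ v w)

/-- A polytope is simple if every vertex has exactly `d` neighbours. -/
def IsSimplePolytope {d : ℕ} (P : Set (Fin d → ℝ)) : Prop :=
  ∀ v ∈ Set.extremePoints ℝ P, {w | Adjacent P v w}.ncard = d

/-- A smooth (full-dimensional) lattice polytope: a simple full-dimensional lattice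
polytope such that at each vertex the primitive edge directions form a ℤ-basis of ℤ^d. -/
def IsSmoothPolytope {d : ℕ} (P : Set (Fin d → ℝ)) : Prop :=
  IsLatticePolytope P ∧ affineSpan ℝ P = ⊤ ∧ IsSimplePolytope P ∧
    ∀ v ∈ Set.extremePoints ℝ P, ∃ b : Module.Basis (Fin d) ℤ (Fin d → ℤ),
      (∀ w, Adjacent P v w → ∃ i : Fin d, ∃ c : ℤ, 0 < c ∧ w = v + c • ofInt (b i)) ∧
      (∀ i : Fin d, ∃ w, Adjacent P v w ∧ ∃ c : ℤ, 0 < c ∧ w = v + c • ofInt (b i))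

/-- The lattice points of `P`. -/
def latticePts {d : ℕ} (P : Set (Fin d → ℝ)) : Set (Fin d → ℝ) :=
  {x ∈ P | ∃ z : Fin d → ℤ, x = ofInt z}

/-- Unimodular equivalence: `Q` is the image of `P` under `x ↦ Mx + t`
with `M ∈ GL_d(ℤ)` and `t ∈ ℤ^d`. -/
def UnimodEquiv {d : ℕ} (P Q : Set (Fin d → ℝ)) : Prop :=
  ∃ M : Matrix (Fin d) (Fin d) ℤ, IsUnit M.det ∧ ∃ t : Fin d → ℤ,
    Q = (fun x => (M.map ((↑) : ℤ → ℝ)).mulVec x + ofInt t) '' P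

/-!
The lattice points `C` of a lattice polygon are closed under taking the midpoint of two points
with the same parity, and a vertex is never the midpoint of two distinct points of `C`. Let `N`
be the set of lattice points that are not vertices. A parity class `K ⊆ C` has at least
`2|K| - 3` sums `x + y` of distinct `x, y ∈ K` (order `ℤ²` lexicographically), and each of
them is `2m` with `m ∈ N`; hence `2|K| ≤ |N| + 3`. If `|C| ≤ 12`, summing over the four
parity classes forces `|N| = 3` and `|K| = 3` for every class, so all four classes have the
same set of pair sums. But a three-element set `{a, b, c}` is recovered from
`{a + b, a + c, b + c}`, while the classes are disjoint.
-/

open Finset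

namespace Finset

variable {α : Type*} [DecidableEq α]

/-- The restricted sumset `K ∔ K`. -/
def pairSums [Add α] (K : Finset α) : Finset α :=
  K.offDiag.image fun p => p.1 + p.2

theorem add_mem_pairSums [Add α] {K : Finset α} {x y : α} (hx : x ∈ K) (hy : y ∈ K)
    (hxy : x ≠ y) : x + y ∈ pairSums K :=
  mem_image.2 ⟨(x, y), mem_offDiag.2 ⟨hx, hy, hxy⟩, rfl⟩

theorem two_mul_card_le_card_pairSums_add_three [LinearOrder α] [AddCommMonoid α]
    [IsOrderedCancelAddMonoid α] (K : Finset α) : 2 * #K ≤ #(pairSums K) + 3 := by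
  rcases le_or_gt #K 1 with hK | hK
  · omega
  have hne : K.Nonempty := card_pos.1 (by omega)
  set a := K.min' hne
  set b := K.max' hne
  have ha : a ∈ K := min'_mem K hne
  have hb : b ∈ K.erase a := mem_erase.2 ⟨(K.min'_lt_max'_of_card hK).ne', max'_mem K hne⟩
  let low := (K.erase a).image (a + ·)
  let high := ((K.erase a).erase b).image (b + ·)
  have hlow : #low = #K - 1 := by
    rw [card_image_of_injective _ (add_right_injective a), card_erase_of_mem ha]
  have hhigh : #high = #K - 2 := by
    rw [card_image_of_injective _ (add_right_injective b), card_erase_of_mem hb,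
      card_erase_of_mem ha]
    omega
  have hdisj : Disjoint low high := by
    simp only [disjoint_left, low, high, mem_image, mem_erase]
    rintro _ ⟨x, ⟨-, hx⟩, rfl⟩ ⟨y, ⟨-, hya, hy⟩, hxy⟩
    have hay : a < y := lt_of_le_of_ne (K.min'_le y hy) (Ne.symm hya)
    have : a + x < b + y := calc
      a + x ≤ a + b := by gcongr; exact K.le_max' x hx
      _ = b + a := add_comm a b
      _ < b + y := by gcongr
    exact this.ne' hxy
  have hsub : low ∪ high ⊆ pairSums K := by
    refine union_subset ?_ ?_ <;> intro _ h <;> simp only [low, high, mem_image, mem_erase] at h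
    · obtain ⟨x, ⟨hxa, hx⟩, rfl⟩ := h
      exact add_mem_pairSums ha hx (Ne.symm hxa)
    · obtain ⟨y, ⟨hyb, -, hy⟩, rfl⟩ := h
      exact add_mem_pairSums (max'_mem K hne) hy (Ne.symm hyb)
  have := card_le_card hsub
  rw [card_union_of_disjoint hdisj] at this
  omega

section AddCommGroup

variable [AddCommGroup α] {K L : Finset α}

theorem image_sub_pairSums_of_card_eq_three (hK : #K = 3) :
    (pairSums K).image (∑ x ∈ K, x - ·) = K := by
  ext x
  simp only [pairSums, mem_image, mem_offDiag, Prod.exists]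
  constructor
  · rintro ⟨_, ⟨y, z, ⟨hy, hz, hyz⟩, rfl⟩, rfl⟩
    have hz' : z ∈ K.erase y := mem_erase.2 ⟨hyz.symm, hz⟩
    obtain ⟨w, hw⟩ := card_eq_one.1 (show #((K.erase y).erase z) = 1 by
      rw [card_erase_of_mem hz', card_erase_of_mem hy, hK])
    have hwK : w ∈ K := mem_of_mem_erase (mem_of_mem_erase (hw ▸ mem_singleton_self w))
    rwa [← add_sum_erase K (fun x => x) hy, ← add_sum_erase _ (fun x => x) hz', hw,
      sum_singleton, add_sub_add_left_eq_sub, add_sub_cancel_left]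
  · intro hx
    obtain ⟨y, z, hyz, hyz'⟩ := card_eq_two.1 (show #(K.erase x) = 2 by
      rw [card_erase_of_mem hx, hK])
    have hy : y ∈ K.erase x := hyz' ▸ mem_insert_self y {z}
    have hz : z ∈ K.erase x := hyz' ▸ mem_insert_of_mem (mem_singleton_self z)
    refine ⟨_, ⟨y, z, ⟨mem_of_mem_erase hy, mem_of_mem_erase hz, hyz⟩, rfl⟩, ?_⟩
    rw [← add_sum_erase K (fun x => x) hx, hyz', sum_pair hyz, add_sub_cancel_right]

theorem sum_pairSums_of_card_eq_three (hK : #K = 3) :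
    ∑ σ ∈ pairSums K, σ = 2 • ∑ x ∈ K, x := by
  set s := ∑ x ∈ K, x
  have hinj : Function.Injective (s - ·) := sub_right_injective
  have hcard : #(pairSums K) = 3 := by
    rw [← card_image_of_injective _ hinj, image_sub_pairSums_of_card_eq_three hK, hK]
  have hs : s = 3 • s - ∑ σ ∈ pairSums K, σ := calc
    s = ∑ x ∈ (pairSums K).image (s - ·), x :=
      congrArg (fun T => ∑ x ∈ T, x) (image_sub_pairSums_of_card_eq_three hK).symm
    _ = ∑ σ ∈ pairSums K, (s - σ) := sum_image hinj.injOn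
    _ = 3 • s - ∑ σ ∈ pairSums K, σ := by rw [sum_sub_distrib, sum_const, hcard]
  rw [eq_sub_iff_add_eq, add_comm, ← eq_sub_iff_add_eq] at hs
  rw [hs, succ_nsmul, add_sub_cancel_right]

theorem eq_of_pairSums_eq [IsAddTorsionFree α] (hK : #K = 3) (hL : #L = 3)
    (h : pairSums K = pairSums L) : K = L := by
  have hsum : ∑ x ∈ K, x = ∑ x ∈ L, x := nsmul_right_injective two_ne_zero <| by
    dsimp only
    rw [← sum_pairSums_of_card_eq_three hK, ← sum_pairSums_of_card_eq_three hL, h]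
  rw [← image_sub_pairSums_of_card_eq_three hK, ← image_sub_pairSums_of_card_eq_three hL, h,
    hsum]

end AddCommGroup

end Finset

def parity {d : ℕ} (z : Fin d → ℤ) : Fin d → ZMod 2 := fun i => z i

theorem exists_add_eq_two_nsmul_of_parity_eq {d : ℕ} {z w : Fin d → ℤ}
    (h : parity z = parity w) : ∃ m, z + w = 2 • m := by
  refine ⟨fun i => (z i + w i) / 2, funext fun i => ?_⟩
  have hzw : (2 : ℤ) ∣ z i - w i :=
    (ZMod.intCast_eq_intCast_iff_dvd_sub _ _ 2).1 (congrFun h i).symm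
  simp only [Pi.add_apply, Pi.smul_apply, two_nsmul]
  omega

theorem two_mul_card_le_card_pairSums_add_three_pi {d : ℕ} (K : Finset (Fin d → ℤ)) :
    2 * #K ≤ #(pairSums K) + 3 :=
  two_mul_card_le_card_pairSums_add_three (α := Lex (Fin d → ℤ)) K

section MidpointClosed

variable {C S : Finset (Fin 2 → ℤ)}
  (hmid : ∀ z ∈ C, ∀ w ∈ C, ∀ m, z + w = 2 • m → m ∈ C)
  (hext : ∀ s ∈ S, ∀ z ∈ C, ∀ w ∈ C, z + w = 2 • s → z = w)
include hmid hext

theorem pairSums_filter_parity_subset (y : Fin 2 → ZMod 2) :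
    pairSums (C.filter (parity · = y)) ⊆ (C \ S).image (2 • ·) := by
  intro _ hσ
  simp only [pairSums, Finset.mem_image, Finset.mem_offDiag, Finset.mem_filter, Prod.exists] at hσ
  obtain ⟨z, w, ⟨⟨hz, hzy⟩, ⟨hw, hwy⟩, hzw⟩, rfl⟩ := hσ
  obtain ⟨m, hm⟩ := exists_add_eq_two_nsmul_of_parity_eq (hzy.trans hwy.symm)
  have hmN : m ∈ C \ S :=
    mem_sdiff.2 ⟨hmid z hz w hw m hm, fun hmS => hzw (hext m hmS z hz w hw hm)⟩
  exact mem_image.2 ⟨m, hmN, hm.symm⟩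

theorem two_mul_card_filter_parity_le (y : Fin 2 → ZMod 2) :
    2 * #(C.filter (parity · = y)) ≤ #(C \ S) + 3 := calc
  2 * #(C.filter (parity · = y)) ≤ #(pairSums (C.filter (parity · = y))) + 3 :=
    two_mul_card_le_card_pairSums_add_three_pi _
  _ ≤ #(C \ S) + 3 := Nat.add_le_add_right
    ((Finset.card_le_card (pairSums_filter_parity_subset hmid hext y)).trans card_image_le) 3

theorem thirteen_le_card_of_nine_le_card (hSC : S ⊆ C) (hS : 9 ≤ #S) : 13 ≤ #C := by
  by_contra! hC
  let K (y : Fin 2 → ZMod 2) := C.filter (parity · = y)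
  have hsum : ∑ y, #(K y) = #C := (card_eq_sum_card_fiberwise fun _ _ => mem_univ _).symm
  have hn : #(C \ S) + #S = #C := card_sdiff_add_card_eq_card hSC
  have hK (y) : 2 * #(K y) ≤ #(C \ S) + 3 := two_mul_card_filter_parity_le hmid hext y
  have hcard_univ : #(univ : Finset (Fin 2 → ZMod 2)) = 4 := by simp
  have hn3 : #(C \ S) = 3 := by
    by_contra hn3
    have : ∑ y, #(K y) ≤ ∑ _ : Fin 2 → ZMod 2, 2 := sum_le_sum fun y _ => by
      have := hK y; omega
    rw [sum_const, hcard_univ, smul_eq_mul] at this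
    omega
  have hK3 : ∀ y, #(K y) = 3 := by
    have hle : ∀ y ∈ Finset.univ, #(K y) ≤ 3 := fun y _ => by have := hK y; omega
    refine fun y => (sum_eq_sum_iff_of_le (f := fun y => #(K y)) (g := fun _ => 3) hle).1
      (le_antisymm (sum_le_sum hle) ?_) y (mem_univ y)
    rw [sum_const, hcard_univ, smul_eq_mul]
    omega
  have hD : #((C \ S).image (2 • ·)) = 3 := by
    rw [Finset.card_image_of_injective _ (nsmul_right_injective two_ne_zero), hn3]
  have hpair (y) : pairSums (K y) = (C \ S).image (2 • ·) :=
    eq_of_subset_of_card_le (pairSums_filter_parity_subset hmid hext y) <| by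
      have := two_mul_card_le_card_pairSums_add_three_pi (K y)
      rw [hK3 y] at this
      rw [hD]
      omega
  obtain ⟨x, hx⟩ := card_pos.1 (by rw [hK3 0]; norm_num)
  have hx1 : x ∈ K 1 := eq_of_pairSums_eq (hK3 0) (hK3 1) ((hpair 0).trans (hpair 1).symm) ▸ hx
  simp only [K, Finset.mem_filter] at hx hx1
  exact absurd (hx.2.symm.trans hx1.2) (by decide)

end MidpointClosed

section LatticePoints

variable {d : ℕ} {P : Set (Fin d → ℝ)}

theorem ofInt_injective : Function.Injective (ofInt (d := d)) := fun _ _ h =>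
  funext fun i => Int.cast_injective (congrFun h i)

theorem isClosedEmbedding_ofInt : Topology.IsClosedEmbedding (ofInt (d := d)) :=
  .piMap fun _ => Int.isClosedEmbedding_coe_real

theorem ofInt_mem_openSegment {z w m : Fin d → ℤ} (h : z + w = 2 • m) :
    ofInt m ∈ openSegment ℝ (ofInt z) (ofInt w) := by
  refine ⟨1 / 2, 1 / 2, by norm_num, by norm_num, by norm_num, funext fun i => ?_⟩
  have hi : (z i + w i : ℝ) = 2 * m i := by exact_mod_cast congrFun h i
  simp only [ofInt, Pi.add_apply, Pi.smul_apply, smul_eq_mul]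
  linarith

theorem latticePts_eq_image_preimage (P : Set (Fin d → ℝ)) :
    latticePts P = ofInt '' (ofInt ⁻¹' P) := by
  ext x
  constructor
  · rintro ⟨hx, z, rfl⟩
    exact ⟨z, hx, rfl⟩
  · rintro ⟨z, hz, rfl⟩
    exact ⟨hz, z, rfl⟩

namespace IsLatticePolytope

variable (hP : IsLatticePolytope P)
include hP

theorem convex : Convex ℝ P := by
  obtain ⟨V, rfl⟩ := hP
  exact convex_convexHull ℝ _

theorem finite_preimage_ofInt : (ofInt ⁻¹' P).Finite := by
  obtain ⟨V, rfl⟩ := hP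
  exact (isClosedEmbedding_ofInt.isCompact_preimage
    ((V.finite_toSet.image _).isCompact_convexHull ℝ)).finite_of_discrete

theorem extremePoints_subset_range_ofInt : extremePoints ℝ P ⊆ range ofInt := by
  obtain ⟨V, rfl⟩ := hP
  exact extremePoints_convexHull_subset.trans (image_subset_range _ _)

end IsLatticePolytope

end LatticePoints

/-- Every smooth lattice polygon with at least 9 vertices has at least 13 lattice points. -/
theorem smooth_polygon_nine_vertices (P : Set (Fin 2 → ℝ)) (hP : IsSmoothPolytope P)
    (hv : 9 ≤ (Set.extremePoints ℝ P).ncard) :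
    13 ≤ (latticePts P).ncard := by
  have hlat : IsLatticePolytope P := hP.1
  have hfin := hlat.finite_preimage_ofInt
  have hsub : ofInt ⁻¹' extremePoints ℝ P ⊆ ofInt ⁻¹' P :=
    preimage_mono extremePoints_subset
  rw [← image_preimage_eq_of_subset hlat.extremePoints_subset_range_ofInt,
    ncard_image_of_injective _ ofInt_injective, ncard_eq_toFinset_card _ (hfin.subset hsub)] at hv
  rw [latticePts_eq_image_preimage, ncard_image_of_injective _ ofInt_injective,
    ncard_eq_toFinset_card _ hfin]
  refine thirteen_le_card_of_nine_le_card ?_ ?_ (Finite.toFinset_subset_toFinset.2 hsub) hv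
  · simp only [Finite.mem_toFinset, Set.mem_preimage]
    exact fun z hz w hw m h => hlat.convex.openSegment_subset hz hw (ofInt_mem_openSegment h)
  · simp only [Finite.mem_toFinset, Set.mem_preimage]
    intro s hs z hz w hw h
    obtain ⟨hzs, hws⟩ := (mem_extremePoints.1 hs).2 _ hz _ hw (ofInt_mem_openSegment h)
    exact ofInt_injective (hzs.trans hws.symm)
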